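/- Among all choices of scalar w ≥ 0, the quantizer Q_w(θ) = w·m(θ) (m the ternary mask with threshold Δ ∈ (0,1)) minimizing E[(θ - Q_w(θ))²] for θ ∼ U(-1,1) is w = (1+Δ)/2, and the minimal error is 1/3 - (1-Δ)(1+Δ)²/4. -/

import Mathlib

open MeasureTheory ProbabilityTheory

/-- The uniform probability measure on the interval `[-1, 1]`. -/
noncomputable def unif : Measure ℝ :=
  (2 : ENNReal)⁻¹ • (volume.restrict (Set.Icc (-1 : ℝ) 1))

/-- The ternary mask with threshold `Δ`. -/
noncomputable def mask (Δ x : ℝ) : ℝ :=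
  if Δ < x then 1 else if x < -Δ then -1 else 0

/-! The mask is constant on each of `(-1, -Δ)`, `(-Δ, Δ)`, `(Δ, 1)`, so the mean squared error is a
quadratic in `w`, namely `1/3 - (1 - Δ²) w + (1 - Δ) w²`; completing the square exhibits its
minimiser `(1 + Δ)/2` and its minimum. -/

open Set

lemma integral_unif (f : ℝ → ℝ) : ∫ x, f x ∂unif = 2⁻¹ * ∫ x in (-1 : ℝ)..1, f x := by
  rw [unif, integral_smul_measure, intervalIntegral.integral_of_le (by norm_num),
    ← integral_Icc_eq_integral_Ioc]
  norm_num

lemma intervalIntegral_sq_sub (a b c : ℝ) :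
    ∫ x in a..b, (x - c) ^ 2 = ((b - c) ^ 3 - (a - c) ^ 3) / 3 := by
  rw [intervalIntegral.integral_comp_sub_right (· ^ 2), integral_pow]
  norm_num

section mask

variable {Δ x : ℝ}

lemma mask_of_lt_neg (hΔ : 0 ≤ Δ) (hx : x < -Δ) : mask Δ x = -1 := by
  rw [mask, if_neg (by linarith), if_pos hx]

lemma mask_of_mem_Icc (hx : x ∈ Icc (-Δ) Δ) : mask Δ x = 0 := by
  rw [mask, if_neg hx.2.not_gt, if_neg hx.1.not_gt]

lemma mask_of_lt (hx : Δ < x) : mask Δ x = 1 := by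
  rw [mask, if_pos hx]

lemma intervalIntegral_comp_mask (g : ℝ → ℝ → ℝ) (hg : ∀ m, Continuous (g · m))
    (hΔ : 0 ≤ Δ) (hΔ1 : Δ ≤ 1) :
    ∫ x in (-1 : ℝ)..1, g x (mask Δ x) =
      (∫ x in (-1 : ℝ)..(-Δ), g x (-1)) + (∫ x in (-Δ)..Δ, g x 0) + ∫ x in Δ..1, g x 1 := by
  have hL : EqOn (fun x => g x (mask Δ x)) (g · (-1)) (uIoo (-1) (-Δ)) := by
    rw [uIoo_of_le (by linarith)]
    intro x hx
    simp only [mask_of_lt_neg hΔ hx.2]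
  have hM : EqOn (fun x => g x (mask Δ x)) (g · 0) (uIoo (-Δ) Δ) := by
    rw [uIoo_of_le (by linarith)]
    intro x hx
    simp only [mask_of_mem_Icc (Ioo_subset_Icc_self hx)]
  have hR : EqOn (fun x => g x (mask Δ x)) (g · 1) (uIoo Δ 1) := by
    rw [uIoo_of_le hΔ1]
    intro x hx
    simp only [mask_of_lt hx.1]
  have iL := ((hg (-1)).intervalIntegrable (μ := volume) (-1) (-Δ)).congr_uIoo hL.symm
  have iM := ((hg 0).intervalIntegrable (μ := volume) (-Δ) Δ).congr_uIoo hM.symm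
  have iR := ((hg 1).intervalIntegrable (μ := volume) Δ 1).congr_uIoo hR.symm
  rw [← intervalIntegral.integral_add_adjacent_intervals (iL.trans iM) iR,
    ← intervalIntegral.integral_add_adjacent_intervals iL iM,
    intervalIntegral.integral_congr_uIoo hL, intervalIntegral.integral_congr_uIoo hM,
    intervalIntegral.integral_congr_uIoo hR]

end mask

lemma integral_sq_sub_mul_mask (Δ w : ℝ) (hΔ : 0 ≤ Δ) (hΔ1 : Δ ≤ 1) :
    ∫ x, (x - w * mask Δ x) ^ 2 ∂unif =
      1 / 3 - (1 - Δ) * (1 + Δ) ^ 2 / 4 + (1 - Δ) * (w - (1 + Δ) / 2) ^ 2 := by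
  rw [integral_unif, intervalIntegral_comp_mask (fun x m => (x - w * m) ^ 2) (by fun_prop) hΔ hΔ1]
  simp only [mul_neg_one, mul_zero, mul_one, intervalIntegral_sq_sub]
  ring

theorem fttq_optimal_scalar (Δ : ℝ) (hΔ : 0 < Δ) (hΔ1 : Δ < 1) :
    (∀ w : ℝ, 0 ≤ w →
        (∫ x, (x - ((1 + Δ) / 2) * mask Δ x) ^ 2 ∂unif)
          ≤ ∫ x, (x - w * mask Δ x) ^ 2 ∂unif) ∧
    (∫ x, (x - ((1 + Δ) / 2) * mask Δ x) ^ 2 ∂unif)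
      = 1 / 3 - (1 - Δ) * (1 + Δ) ^ 2 / 4 := by
  simp only [integral_sq_sub_mul_mask Δ _ hΔ.le hΔ1.le, sub_self]
  refine ⟨fun w _ => ?_, by ring⟩
  linarith [mul_nonneg (sub_nonneg.2 hΔ1.le) (sq_nonneg (w - (1 + Δ) / 2))]
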